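/- Let $a_1, \dots, a_m$ be distinct points in the open upper half-plane and let $\alpha_1, \dots, \alpha_m$ satisfy the transposed Vandermonde system $\sum_{j=1}^m \alpha_j a_j^k = \delta_{k,0}$ for $0 \le k \le m-1$. Then the kernel $K(x) = \frac{1}{2\pi i}\sum_{j=1}^m \left( \frac{\alpha_j}{x - a_j} - \frac{\overline{\alpha_j}}{x - \overline{a_j}} \right)$ satisfies the moment vanishing conditions $\int_{\mathbb{R}} x^k K(x)\, dx = 0$ for $1 \le k \le m-1$ (where the integrals converge absolutely for $k \le m-2$ and as principal values for $k = m-1$). -/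

import Mathlib

open MeasureTheory Complex Filter Topology

/-- The (real part of the) rational kernel
`K(x) = (2πi)⁻¹ ∑ⱼ (αⱼ/(x - aⱼ) - conj αⱼ/(x - conj aⱼ))`. -/
noncomputable def ratKernel (m : ℕ) (a α : Fin m → ℂ) (x : ℝ) : ℝ :=
  ((2 * (Real.pi : ℂ) * Complex.I)⁻¹ *
    ∑ j, (α j / ((x : ℂ) - a j) -
      (starRingEnd ℂ) (α j) / ((x : ℂ) - (starRingEnd ℂ) (a j)))).re

/-!
Conjugation maps `αⱼ/(x - aⱼ)` to the second term of the kernel, so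
`K(x) = π⁻¹ ∑ⱼ Im(αⱼ/(x - aⱼ))`. Dividing `xᵏ` by `x - aⱼ` and using the Vandermonde system,
for `1 ≤ k < m` the polynomial parts add up to the real number `x^(k-1)`, hence
`xᵏ K(x) = π⁻¹ ∑ⱼ Im(βⱼ/(x - aⱼ))` with `βⱼ = αⱼ aⱼᵏ`. Each term has the primitive
`(Im βⱼ/2) log|x - aⱼ|² + Re βⱼ arctan((x - Re aⱼ)/Im aⱼ)`, so its integral over `[-r, r]`
tends to `π Re βⱼ`. The Vandermonde system also gives `∑ⱼ βⱼ = 0`, which makes the sum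
`O(x⁻²)`, hence integrable, with integral `π Re ∑ⱼ βⱼ = 0`.
-/

open ComplexConjugate Finset
open scoped Real

lemma ofReal_sub_ne_zero_of_im_ne_zero {a : ℂ} (ha : a.im ≠ 0) (x : ℝ) : (x : ℂ) - a ≠ 0 := by
  rw [sub_ne_zero]
  rintro rfl
  exact ha (ofReal_im x)

lemma ratKernel_eq (m : ℕ) (a α : Fin m → ℂ) (x : ℝ) :
    ratKernel m a α x = π⁻¹ * (∑ j, α j / ((x : ℂ) - a j)).im := by
  have hconj : ∀ j, conj (α j) / ((x : ℂ) - conj (a j)) = conj (α j / ((x : ℂ) - a j)) :=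
    fun j => by rw [map_div₀, map_sub, conj_ofReal]
  simp only [ratKernel, hconj]
  rw [sum_sub_distrib, ← map_sum, sub_conj]
  rw [← ofReal_re (π⁻¹ * _)]
  congr 1
  push_cast
  field_simp

lemma div_sub_eq_geom_sum₂_add {x b : ℂ} (h : x - b ≠ 0) (k : ℕ) :
    x ^ k / (x - b) = ∑ i ∈ range k, x ^ i * b ^ (k - 1 - i) + b ^ k / (x - b) := by
  rw [← sub_add_cancel (x ^ k) (b ^ k), add_div, ← geom_sum₂_mul, mul_div_cancel_right₀ _ h]

lemma sum_mul_geom_sum₂_eq_pow {ι : Type*} [Fintype ι] {a α : ι → ℂ} {k : ℕ} (hk : 0 < k)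
    (hvand : ∀ n < k, ∑ j, α j * a j ^ n = if n = 0 then 1 else 0) (x : ℂ) :
    ∑ j, α j * ∑ i ∈ range k, x ^ i * a j ^ (k - 1 - i) = x ^ (k - 1) := by
  calc ∑ j, α j * ∑ i ∈ range k, x ^ i * a j ^ (k - 1 - i)
      = ∑ i ∈ range k, x ^ i * ∑ j, α j * a j ^ (k - 1 - i) := by
        simp only [mul_sum]
        rw [sum_comm]
        exact sum_congr rfl fun i _ => sum_congr rfl fun j _ => by ring
    _ = ∑ i ∈ range k, if i = k - 1 then x ^ i else 0 :=
        sum_congr rfl fun i hi => by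
          have := mem_range.1 hi
          rw [hvand _ (by omega), mul_ite, mul_one, mul_zero]
          exact if_congr (by omega) rfl rfl
    _ = x ^ (k - 1) := by simp [hk]

lemma pow_mul_ratKernel {m : ℕ} {a α : Fin m → ℂ} (ha : ∀ j, (a j).im ≠ 0) {k : ℕ} (hk : 0 < k)
    (hvand : ∀ n < k, ∑ j, α j * a j ^ n = if n = 0 then 1 else 0) (x : ℝ) :
    x ^ k * ratKernel m a α x = π⁻¹ * (∑ j, α j * a j ^ k / ((x : ℂ) - a j)).im := by
  have hsum : (x : ℂ) ^ k * ∑ j, α j / ((x : ℂ) - a j)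
      = (x : ℂ) ^ (k - 1) + ∑ j, α j * a j ^ k / ((x : ℂ) - a j) := by
    calc (x : ℂ) ^ k * ∑ j, α j / ((x : ℂ) - a j)
        = ∑ j, α j * ((x : ℂ) ^ k / ((x : ℂ) - a j)) :=
          mul_sum _ _ _ |>.trans (sum_congr rfl fun j _ => by ring)
      _ = _ := by
        simp only [div_sub_eq_geom_sum₂_add (ofReal_sub_ne_zero_of_im_ne_zero (ha _) x), mul_add,
          sum_add_distrib, sum_mul_geom_sum₂_eq_pow hk hvand, mul_div_assoc]
  rw [ratKernel_eq, mul_left_comm, ← im_ofReal_mul, ofReal_pow, hsum, add_im, ← ofReal_pow,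
    ofReal_im, zero_add]

lemma continuous_div_ofReal_sub {a : ℂ} (ha : a.im ≠ 0) (β : ℂ) :
    Continuous fun x : ℝ => β / ((x : ℂ) - a) :=
  continuous_const.div (by fun_prop) (ofReal_sub_ne_zero_of_im_ne_zero ha)

lemma norm_ofReal_sub_I_sq (x : ℝ) : ‖(x : ℂ) - I‖ ^ 2 = 1 + x ^ 2 := by
  rw [Complex.sq_norm, normSq_apply]
  simp only [sub_re, ofReal_re, I_re, sub_zero, sub_im, ofReal_im, I_im, zero_sub, mul_neg, mul_one,
    neg_neg]
  ring

lemma norm_ofReal_sub_I_le {a : ℂ} (ha : a.im ≠ 0) (x : ℝ) :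
    ‖(x : ℂ) - I‖ ≤ (1 + ‖a - I‖ / |a.im|) * ‖(x : ℂ) - a‖ := by
  have him : |a.im| ≤ ‖(x : ℂ) - a‖ := by
    simpa using abs_im_le_norm ((x : ℂ) - a)
  calc ‖(x : ℂ) - I‖ = ‖((x : ℂ) - a) + (a - I)‖ := by ring_nf
    _ ≤ ‖(x : ℂ) - a‖ + ‖a - I‖ := norm_add_le _ _
    _ ≤ ‖(x : ℂ) - a‖ + ‖a - I‖ / |a.im| * ‖(x : ℂ) - a‖ := by
        gcongr
        rw [div_mul_eq_mul_div, le_div_iff₀ (abs_pos.2 ha)]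
        gcongr
    _ = _ := by ring

lemma integrable_div_ofReal_sub_mul_ofReal_sub_I {a : ℂ} (ha : a.im ≠ 0) (c : ℂ) :
    Integrable fun x : ℝ => c / (((x : ℂ) - a) * ((x : ℂ) - I)) := by
  set C := 1 + ‖a - I‖ / |a.im|
  have hI : I.im ≠ 0 := by simp
  have hcont : Continuous fun x : ℝ => c / (((x : ℂ) - a) * ((x : ℂ) - I)) :=
    continuous_const.div (by fun_prop) fun x =>
      mul_ne_zero (ofReal_sub_ne_zero_of_im_ne_zero ha x) (ofReal_sub_ne_zero_of_im_ne_zero hI x)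
  refine (integrable_inv_one_add_sq.const_mul (‖c‖ * C)).mono' hcont.aestronglyMeasurable
    (ae_of_all _ fun x => ?_)
  have hA := norm_pos_iff.2 (ofReal_sub_ne_zero_of_im_ne_zero ha x)
  have hB := norm_pos_iff.2 (ofReal_sub_ne_zero_of_im_ne_zero hI x)
  rw [norm_div, norm_mul, ← norm_ofReal_sub_I_sq, mul_assoc, div_eq_mul_inv]
  gcongr
  rw [inv_le_iff_one_le_mul₀ (by positivity)]
  calc 1 = ‖(x : ℂ) - I‖ * ‖(x : ℂ) - I‖ * (‖(x : ℂ) - I‖ ^ 2)⁻¹ := by field_simp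
    _ ≤ C * ‖(x : ℂ) - a‖ * ‖(x : ℂ) - I‖ * (‖(x : ℂ) - I‖ ^ 2)⁻¹ := by
        gcongr
        exact norm_ofReal_sub_I_le ha x
    _ = _ := by ring

lemma integrable_sum_div_ofReal_sub {ι : Type*} [Fintype ι] {a β : ι → ℂ}
    (ha : ∀ j, (a j).im ≠ 0) (hβ : ∑ j, β j = 0) :
    Integrable fun x : ℝ => ∑ j, β j / ((x : ℂ) - a j) := by
  refine (integrable_finsetSum univ fun j _ =>
    integrable_div_ofReal_sub_mul_ofReal_sub_I (ha j) (β j * (a j - I))).congr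
    (ae_of_all _ fun x => ?_)
  -- subtracting this zero turns each term into `O(x⁻²)`
  have hI : ∑ j, β j / ((x : ℂ) - I) = 0 := by rw [← sum_div, hβ, zero_div]
  dsimp only
  rw [← sub_zero (∑ j, β j / ((x : ℂ) - a j)), ← hI, ← sum_sub_distrib]
  refine sum_congr rfl fun j _ => ?_
  have := ofReal_sub_ne_zero_of_im_ne_zero (ha j) x
  have := ofReal_sub_ne_zero_of_im_ne_zero (show I.im ≠ 0 by simp) x
  field_simp
  ring

lemma hasDerivAt_im_div_ofReal_sub {a : ℂ} (ha : a.im ≠ 0) (β : ℂ) (x : ℝ) :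
    HasDerivAt (fun y : ℝ => β.im * Real.log ((y - a.re) ^ 2 + a.im ^ 2) / 2
        + β.re * Real.arctan ((y - a.re) / a.im)) (β / ((x : ℂ) - a)).im x := by
  have hpos : 0 < (x - a.re) ^ 2 + a.im ^ 2 := by positivity
  have hlog := ((((hasDerivAt_id x).sub_const a.re).pow 2).add_const (a.im ^ 2)).log hpos.ne'
  have harctan := (((hasDerivAt_id x).sub_const a.re).div_const a.im).arctan
  refine (((hlog.const_mul β.im).div_const 2).add (harctan.const_mul β.re)).congr_deriv ?_
  rw [div_im, normSq_apply]
  simp only [Nat.cast_ofNat, id_eq, Nat.add_one_sub_one, pow_one, mul_one, Pi.pow_apply, one_div,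
    sub_re, ofReal_re, sub_im, ofReal_im, zero_sub, mul_neg, neg_mul, neg_neg]
  field_simp
  ring

lemma tendsto_log_sub_log_sq_add_sq (p q : ℝ) :
    Tendsto (fun r : ℝ => Real.log ((r - p) ^ 2 + q ^ 2) - Real.log ((r + p) ^ 2 + q ^ 2))
      atTop (𝓝 0) := by
  have hcont : ContinuousAt (fun t : ℝ =>
      Real.log (((1 - p * t) ^ 2 + (q * t) ^ 2) / ((1 + p * t) ^ 2 + (q * t) ^ 2))) 0 := by
    fun_prop (disch := norm_num)
  have hlim := hcont.tendsto.comp tendsto_inv_atTop_zero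
  norm_num at hlim
  refine hlim.congr' ?_
  filter_upwards [eventually_gt_atTop |p|] with r hr
  have hr0 : r ≠ 0 := ((abs_nonneg p).trans_lt hr).ne'
  have hsub : (r - p) ^ 2 + q ^ 2 ≠ 0 := by
    have : 0 < r - p := by linarith [le_abs_self p]
    positivity
  have hadd : (r + p) ^ 2 + q ^ 2 ≠ 0 := by
    have : 0 < r + p := by linarith [neg_abs_le p]
    positivity
  rw [Function.comp_apply, ← Real.log_div hsub hadd]
  congr 1
  field_simp

lemma tendsto_intervalIntegral_im_div_ofReal_sub {a : ℂ} (ha : 0 < a.im) (β : ℂ) :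
    Tendsto (fun r : ℝ => ∫ x in (-r)..r, (β / ((x : ℂ) - a)).im) atTop (𝓝 (π * β.re)) := by
  have hFTC : ∀ r : ℝ, ∫ x in (-r)..r, (β / ((x : ℂ) - a)).im
      = β.im / 2 * (Real.log ((r - a.re) ^ 2 + a.im ^ 2) - Real.log ((r + a.re) ^ 2 + a.im ^ 2))
        + β.re * (Real.arctan ((r - a.re) / a.im) - Real.arctan ((-r - a.re) / a.im)) := by
    intro r
    rw [intervalIntegral.integral_eq_sub_of_hasDerivAt
      (fun x _ => hasDerivAt_im_div_ofReal_sub ha.ne' β x)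
      ((continuous_im.comp (continuous_div_ofReal_sub ha.ne' β)).intervalIntegrable _ _)]
    rw [show (-r - a.re) ^ 2 = (r + a.re) ^ 2 by ring]
    ring
  have hatTop : Tendsto (fun r : ℝ => Real.arctan ((r - a.re) / a.im)) atTop (𝓝 (π / 2)) :=
    (Real.tendsto_arctan_atTop.mono_right nhdsWithin_le_nhds).comp
      ((tendsto_atTop_add_const_right _ _ tendsto_id).atTop_div_const ha)
  have hatBot : Tendsto (fun r : ℝ => Real.arctan ((-r - a.re) / a.im)) atTop (𝓝 (-(π / 2))) :=
    (Real.tendsto_arctan_atBot.mono_right nhdsWithin_le_nhds).comp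
      ((tendsto_atBot_add_const_right _ _ tendsto_neg_atTop_atBot).atBot_div_const ha)
  simp only [hFTC]
  convert ((tendsto_log_sub_log_sq_add_sq a.re a.im).const_mul (β.im / 2)).add
    ((hatTop.sub hatBot).const_mul β.re) using 2
  ring

lemma tendsto_intervalIntegral_im_sum_div_ofReal_sub {ι : Type*} [Fintype ι] {a : ι → ℂ}
    (ha : ∀ j, 0 < (a j).im) (β : ι → ℂ) :
    Tendsto (fun r : ℝ => ∫ x in (-r)..r, (∑ j, β j / ((x : ℂ) - a j)).im) atTop
      (𝓝 (π * (∑ j, β j).re)) := by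
  simp only [im_sum, re_sum, mul_sum]
  refine (tendsto_finsetSum _ fun j _ =>
    tendsto_intervalIntegral_im_div_ofReal_sub (ha j) (β j)).congr fun r => ?_
  exact (intervalIntegral.integral_finsetSum fun j _ =>
    (continuous_im.comp (continuous_div_ofReal_sub (ha j).ne' (β j))).intervalIntegrable _ _).symm

lemma integral_im_sum_div_ofReal_sub_eq_zero {ι : Type*} [Fintype ι] {a β : ι → ℂ}
    (ha : ∀ j, 0 < (a j).im) (hβ : ∑ j, β j = 0) :
    ∫ x : ℝ, (∑ j, β j / ((x : ℂ) - a j)).im = 0 := by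
  refine tendsto_nhds_unique (intervalIntegral_tendsto_integral
    (integrable_sum_div_ofReal_sub (fun j => (ha j).ne') hβ).im tendsto_neg_atTop_atBot
    tendsto_id) ?_
  simpa [hβ] using tendsto_intervalIntegral_im_sum_div_ofReal_sub ha β

theorem ratKernel_moments_vanish_general
    (m : ℕ) (a α : Fin m → ℂ)
    (ha : ∀ j, 0 < (a j).im)
    (hvand : ∀ k : ℕ, k < m → ∑ j, α j * a j ^ k = if k = 0 then 1 else 0) :
    (∀ k : ℕ, 1 ≤ k → k ≤ m - 2 →
        Integrable (fun x : ℝ => x ^ k * ratKernel m a α x) ∧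
          ∫ x : ℝ, x ^ k * ratKernel m a α x = 0) ∧
      (2 ≤ m →
        Tendsto (fun r : ℝ => ∫ x in (-r)..r, x ^ (m - 1) * ratKernel m a α x)
          atTop (𝓝 0)) := by
  have hmoment : ∀ k, 0 < k → k < m → ∀ x : ℝ,
      x ^ k * ratKernel m a α x = π⁻¹ * (∑ j, α j * a j ^ k / ((x : ℂ) - a j)).im :=
    fun k hk hkm => pow_mul_ratKernel (fun j => (ha j).ne') hk fun n hn => hvand n (hn.trans hkm)
  have hβ : ∀ k, 0 < k → k < m → ∑ j, α j * a j ^ k = 0 :=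
    fun k hk hkm => by rw [hvand k hkm, if_neg hk.ne']
  refine ⟨fun k hk hkm => ?_, fun hm => ?_⟩
  · have hβk := hβ k hk (by omega)
    simp only [hmoment k hk (by omega)]
    refine ⟨(integrable_sum_div_ofReal_sub (fun j => (ha j).ne') hβk).im.const_mul _, ?_⟩
    rw [integral_const_mul, integral_im_sum_div_ofReal_sub_eq_zero ha hβk, mul_zero]
  · simp only [hmoment (m - 1) (by omega) (by omega), intervalIntegral.integral_const_mul]
    simpa [hβ (m - 1) (by omega) (by omega)] using
      (tendsto_intervalIntegral_im_sum_div_ofReal_sub ha fun j => α j * a j ^ (m - 1)).const_mul π⁻¹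

/-- Moment vanishing conditions for the `m`-th order rational kernel: if the `aⱼ` are
distinct points of the open upper half-plane and the `αⱼ` solve the transposed
Vandermonde system, then `∫ xᵏ K(x) dx = 0` for `1 ≤ k ≤ m - 1`; the integral
converges absolutely for `k ≤ m - 2` and as a principal value for `k = m - 1`. -/
theorem ratKernel_moments_vanish
    (m : ℕ) (hm : 0 < m) (a α : Fin m → ℂ)
    (ha : ∀ j, 0 < (a j).im) (hinj : Function.Injective a)
    (hvand : ∀ k : ℕ, k < m → ∑ j, α j * a j ^ k = if k = 0 then 1 else 0) :
    (∀ k : ℕ, 1 ≤ k → k ≤ m - 2 →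
        Integrable (fun x : ℝ => x ^ k * ratKernel m a α x) ∧
          ∫ x : ℝ, x ^ k * ratKernel m a α x = 0) ∧
      (2 ≤ m →
        Tendsto (fun r : ℝ => ∫ x in (-r)..r, x ^ (m - 1) * ratKernel m a α x)
          atTop (𝓝 0)) :=
  ratKernel_moments_vanish_general m a α ha hvand
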